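/- Let n ≥ 2 and Λ' a proper subset of {1,…,n−1}, and let s_{Λ'} ⊆ sl(n,ℝ) be the associated solvable subalgebra with the induced product ∇_X Y := XY − (tr(XY)/n)·I_n. Then ∇ on s_{Λ'} is projectively equivalent to a flat affine connection: there exists an ℝ-linear functional λ : s_{Λ'} → ℝ such that the modified product ∇^λ_X Y := ∇_X Y + λ(X)·Y + λ(Y)·X has identically vanishing curvature, i.e. ∇^λ_X(∇^λ_Y Z) − ∇^λ_Y(∇^λ_X Z) − ∇^λ_{[X,Y]} Z = 0 for all X, Y, Z ∈ s_{Λ'}. -/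

import Mathlib

/-!
On `s_{Λ'}` the last row of every matrix vanishes off the diagonal (`a_{Λ'}` is diagonal and the
last block row of `n_{Λ'}` is zero), so `X ↦ X_{nn}` is multiplicative on products of elements of
`s_{Λ'}`. Taking `λ(X) := -X_{nn}`, hence `λ(I) = -1` and `λ(XY) = -λ(X)λ(Y)`, the curvature of
`∇^λ` expands into terms that cancel using only these identities, `tr X = 0` and
`tr(XY) = tr(YX)`.
-/

noncomputable section

/-- The block function `b(i) = #{k : 1 ≤ k < i, k ∉ Λ'}` (here `i : Fin n` is the
0-based index corresponding to the 1-based row index `i+1`). -/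
def blk (Λ : Finset ℕ) {n : ℕ} (i : Fin n) : ℕ :=
  ((Finset.Icc 1 (i : ℕ)).filter (fun k => k ∉ Λ)).card

/-- The diagonal matrix `H^i` whose first `i` diagonal entries are `(n−i)/n` and whose
last `n−i` entries are `−i/n`. -/
def Hmat (n i : ℕ) : Matrix (Fin n) (Fin n) ℝ :=
  Matrix.diagonal (fun t : Fin n =>
    if (t : ℕ) < i then ((n : ℝ) - (i : ℝ)) / (n : ℝ) else -(i : ℝ) / (n : ℝ))

/-- Membership in `a_{Λ'}`: the real span of the `H^i` with `i ∈ {1,…,n−1}`, `i ∉ Λ'`. -/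
def inA (n : ℕ) (Λ : Finset ℕ) (X : Matrix (Fin n) (Fin n) ℝ) : Prop :=
  X ∈ Submodule.span ℝ
    {M : Matrix (Fin n) (Fin n) ℝ |
      ∃ i ∈ Finset.Icc 1 (n - 1), i ∉ Λ ∧ M = Hmat n i}

/-- Membership in `n_{Λ'}`: matrices with `X_{ij} = 0` unless `b(i) < b(j)`. -/
def inN (n : ℕ) (Λ : Finset ℕ) (X : Matrix (Fin n) (Fin n) ℝ) : Prop :=
  ∀ i j : Fin n, ¬ blk Λ i < blk Λ j → X i j = 0

/-- Membership in `s_{Λ'} = a_{Λ'} + n_{Λ'}`. -/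
def inS (n : ℕ) (Λ : Finset ℕ) (X : Matrix (Fin n) (Fin n) ℝ) : Prop :=
  ∃ A N : Matrix (Fin n) (Fin n) ℝ, inA n Λ A ∧ inN n Λ N ∧ X = A + N

/-- The product `∇_X Y = XY − (tr(XY)/n)·I_n` on `sl(n,ℝ)`. -/
def nabSL (n : ℕ) (X Y : Matrix (Fin n) (Fin n) ℝ) : Matrix (Fin n) (Fin n) ℝ :=
  X * Y - (Matrix.trace (X * Y) / (n : ℝ)) • (1 : Matrix (Fin n) (Fin n) ℝ)

/-- The projectively modified product `∇^λ_X Y = ∇_X Y + λ(X)·Y + λ(Y)·X`. -/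
def nabLam (n : ℕ) (lam : Matrix (Fin n) (Fin n) ℝ →ₗ[ℝ] ℝ)
    (X Y : Matrix (Fin n) (Fin n) ℝ) : Matrix (Fin n) (Fin n) ℝ :=
  nabSL n X Y + lam X • Y + lam Y • X

theorem nabLam_curvature_eq_zero {n : ℕ} {S : Set (Matrix (Fin n) (Fin n) ℝ)}
    (lam : Matrix (Fin n) (Fin n) ℝ →ₗ[ℝ] ℝ) (hone : lam 1 = -1)
    (htrace : ∀ X ∈ S, X.trace = 0)
    (hmul : ∀ X ∈ S, ∀ Y ∈ S, lam (X * Y) = -(lam X * lam Y))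
    {X Y Z : Matrix (Fin n) (Fin n) ℝ} (hX : X ∈ S) (hY : Y ∈ S) (hZ : Z ∈ S) :
    nabLam n lam X (nabLam n lam Y Z) - nabLam n lam Y (nabLam n lam X Z)
      - nabLam n lam ⁅X, Y⁆ Z = 0 := by
  simp only [nabLam, nabSL, Ring.lie_def, mul_sub, sub_mul, mul_add, mul_smul_comm, mul_one,
    Matrix.trace_add, Matrix.trace_sub, Matrix.trace_smul, map_add, map_sub, map_smul, mul_assoc,
    smul_eq_mul, htrace X hX, htrace Y hY, hmul X hX Y hY, hmul Y hY X hX, hmul X hX Z hZ,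
    hmul Y hY Z hZ, hone, Matrix.trace_mul_comm Y X]
  match_scalars <;> ring

theorem Matrix.mul_apply_diag_of_row_eq_zero {n R : Type*} [Fintype n] [DecidableEq n]
    [NonUnitalNonAssocSemiring R] {X : Matrix n n R} (Y : Matrix n n R) {l : n}
    (hX : ∀ s, s ≠ l → X l s = 0) : (X * Y) l l = X l l * Y l l := by
  rw [Matrix.mul_apply, Finset.sum_eq_single l (fun s _ hs => by rw [hX s hs, zero_mul])
    (fun h => absurd (Finset.mem_univ l) h)]

theorem blk_mono (Λ : Finset ℕ) {n : ℕ} {i j : Fin n} (h : i ≤ j) : blk Λ i ≤ blk Λ j :=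
  Finset.card_le_card <| Finset.filter_subset_filter _ <| Finset.Icc_subset_Icc_right h

theorem trace_Hmat {n i : ℕ} (hi : i ≤ n) : (Hmat n i).trace = 0 := by
  rw [Hmat, Matrix.trace_diagonal,
    Fin.sum_univ_eq_sum_range (fun k => if k < i then ((n : ℝ) - i) / n else -(i : ℝ) / n),
    Finset.sum_ite]
  have hlt : (Finset.range n).filter (· < i) = Finset.range i := by
    ext k; simp only [Finset.mem_filter, Finset.mem_range]; omega
  have hge : (Finset.range n).filter (fun k => ¬ k < i) = Finset.Ico i n := by
    ext k; simp only [Finset.mem_filter, Finset.mem_range, Finset.mem_Ico]; omega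
  rw [hlt, hge]
  simp only [Finset.sum_const, Finset.card_range, Nat.card_Ico, nsmul_eq_mul, Nat.cast_sub hi]
  ring

theorem inA.apply_of_ne {n : ℕ} {Λ : Finset ℕ} {A : Matrix (Fin n) (Fin n) ℝ}
    (hA : inA n Λ A) {i j : Fin n} (hij : i ≠ j) : A i j = 0 := by
  refine (Submodule.span_le (p := LinearMap.ker (Matrix.entryLinearMap ℝ ℝ i j))).2 ?_ hA
  rintro _ ⟨k, -, -, rfl⟩
  simp [Hmat, Matrix.diagonal_apply_ne _ hij]

theorem inA.trace_eq_zero {n : ℕ} {Λ : Finset ℕ} {A : Matrix (Fin n) (Fin n) ℝ}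
    (hA : inA n Λ A) : A.trace = 0 := by
  refine (Submodule.span_le (p := LinearMap.ker (Matrix.traceLinearMap (Fin n) ℝ ℝ))).2 ?_ hA
  rintro _ ⟨k, hk, -, rfl⟩
  exact trace_Hmat (by simp only [Finset.mem_Icc] at hk; omega)

theorem inN.last_row_eq_zero {m : ℕ} {Λ : Finset ℕ} {N : Matrix (Fin (m + 1)) (Fin (m + 1)) ℝ}
    (hN : inN (m + 1) Λ N) (s : Fin (m + 1)) : N (Fin.last m) s = 0 :=
  hN _ _ (not_lt.2 (blk_mono Λ (Fin.le_last s)))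

theorem inN.trace_eq_zero {n : ℕ} {Λ : Finset ℕ} {N : Matrix (Fin n) (Fin n) ℝ}
    (hN : inN n Λ N) : N.trace = 0 :=
  Finset.sum_eq_zero fun t _ => hN t t (lt_irrefl _)

theorem inS.last_row_eq_zero_of_ne {m : ℕ} {Λ : Finset ℕ}
    {X : Matrix (Fin (m + 1)) (Fin (m + 1)) ℝ} (hX : inS (m + 1) Λ X) {s : Fin (m + 1)}
    (hs : s ≠ Fin.last m) : X (Fin.last m) s = 0 := by
  obtain ⟨A, N, hA, hN, rfl⟩ := hX
  rw [Matrix.add_apply, hA.apply_of_ne hs.symm, hN.last_row_eq_zero, add_zero]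

theorem inS.trace_eq_zero {n : ℕ} {Λ : Finset ℕ} {X : Matrix (Fin n) (Fin n) ℝ}
    (hX : inS n Λ X) : X.trace = 0 := by
  obtain ⟨A, N, hA, hN, rfl⟩ := hX
  rw [Matrix.trace_add, hA.trace_eq_zero, hN.trace_eq_zero, add_zero]

theorem solvable_projectively_flat_to_flat_general (n : ℕ) (hn : 2 ≤ n)
    (Λ : Finset ℕ) :
    ∃ lam : Matrix (Fin n) (Fin n) ℝ →ₗ[ℝ] ℝ,
      ∀ X Y Z : Matrix (Fin n) (Fin n) ℝ, inS n Λ X → inS n Λ Y → inS n Λ Z →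
        nabLam n lam X (nabLam n lam Y Z) - nabLam n lam Y (nabLam n lam X Z)
          - nabLam n lam ⁅X, Y⁆ Z = 0 := by
  obtain ⟨m, rfl⟩ : ∃ m, n = m + 1 := ⟨n - 1, by omega⟩
  refine ⟨-Matrix.entryLinearMap ℝ ℝ (Fin.last m) (Fin.last m), fun X Y Z hX hY hZ =>
    nabLam_curvature_eq_zero (S := {X | inS (m + 1) Λ X}) _ ?_ (fun X hX => hX.trace_eq_zero)
      ?_ hX hY hZ⟩
  · simp
  · intro X hX Y _
    simp [Matrix.mul_apply_diag_of_row_eq_zero Y fun s hs => hX.last_row_eq_zero_of_ne hs]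

/-- For `n ≥ 2` and a proper subset `Λ'` of `{1,…,n−1}`, the induced
product `∇` on the solvable subalgebra `s_{Λ'}` is projectively equivalent to a flat
affine connection: for some linear functional `λ`, the modified product
`∇^λ_X Y = ∇_X Y + λ(X)·Y + λ(Y)·X` has identically vanishing curvature on `s_{Λ'}`. -/
theorem solvable_projectively_flat_to_flat (n : ℕ) (hn : 2 ≤ n)
    (Λ : Finset ℕ) (hΛ : Λ ⊆ Finset.Icc 1 (n - 1)) (hΛne : Λ ≠ Finset.Icc 1 (n - 1)) :
    ∃ lam : Matrix (Fin n) (Fin n) ℝ →ₗ[ℝ] ℝ,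
      ∀ X Y Z : Matrix (Fin n) (Fin n) ℝ, inS n Λ X → inS n Λ Y → inS n Λ Z →
        nabLam n lam X (nabLam n lam Y Z) - nabLam n lam Y (nabLam n lam X Z)
          - nabLam n lam ⁅X, Y⁆ Z = 0 :=
  solvable_projectively_flat_to_flat_general n hn Λ

end
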